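/- Under the RCT setup, if additionally the potential outcomes are nonnegatively correlated, Cov[Y₀, Y₁] ≥ 0, then for any real numbers r₀' ≤ 0 and r₁' ≥ 0 the asymptotic variance is conservatively bounded as Var[r₀'·φ_{m,0} + r₁'·φ_{m,1}] ≤ r₀'²·σ₀² + r₁'²·σ₁² + π₀·π₁·(|r₀'|·κ₀/π₀ + |r₁'|·κ₁/π₁)², where κ_a := (E[(Y_a − m_a)²])^{1/2} and σ_a² := Var[Y_a]. -/

import Mathlib

open MeasureTheory ProbabilityTheory

/-- Covariance of two real random variables. -/
noncomputable def cov {Ω : Type*} [MeasurableSpace Ω] (P : MeasureTheory.Measure Ω)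
    (X Z : Ω → ℝ) : ℝ :=
  ∫ ω, (X ω - ∫ x, X x ∂P) * (Z ω - ∫ x, Z x ∂P) ∂P

section Aux

variable {Ω : Type*} [mΩ : MeasurableSpace Ω] {P : Measure Ω} [IsProbabilityMeasure P]

lemma consvar_int_mul {f g : Ω → ℝ} (hf : MemLp f 2 P) (hg : MemLp g 2 P) :
    Integrable (fun ω => f ω * g ω) P := by
  haveI : ENNReal.HolderTriple 2 2 1 := ⟨by norm_num [ENNReal.inv_two_add_inv_two]⟩
  have h : MemLp (f • g) 1 P := hg.smul hf
  rw [memLp_one_iff_integrable] at h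
  exact h

lemma consvar_cs_aux {a b C : ℝ} (ha : 0 < a) (hb : 0 < b)
    (h : 0 ≤ b ^ 2 * a ^ 2 + (-(2 * a * b) * C + a ^ 2 * b ^ 2)) : C ≤ a * b := by
  nlinarith [h, mul_pos ha hb]

end Aux

theorem conservative_variance_bound
    {Ω : Type*} (𝒢 : MeasurableSpace Ω) [mΩ : MeasurableSpace Ω] (P : Measure Ω) [IsProbabilityMeasure P]
    (hG : 𝒢 ≤ mΩ)
    (Y : Fin 2 → Ω → ℝ) (hYL2 : ∀ a, MemLp (Y a) 2 P)
    (A : Ω → Fin 2) (hA : Measurable A)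
    (hindep : Indep (MeasurableSpace.comap A inferInstance)
      (𝒢 ⊔ MeasurableSpace.comap (fun ω => (Y 0 ω, Y 1 ω)) inferInstance) P)
    (π : Fin 2 → ℝ) (hπ : ∀ a, π a = (P {ω | A ω = a}).toReal)
    (hπpos : ∀ a, 0 < π a) (hπlt : ∀ a, π a < 1) (hπsum : π 0 + π 1 = 1)
    (m : Fin 2 → Ω → ℝ) (hmG : ∀ a, Measurable[𝒢] (m a)) (hmL2 : ∀ a, MemLp (m a) 2 P)
    (hcons : ∀ a, ∫ ω, m a ω ∂P = ∫ ω, Y a ω ∂P)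
    (hcovpos : 0 ≤ @cov Ω mΩ P (Y 0) (Y 1))
    (κ : Fin 2 → ℝ) (hκ : ∀ a, κ a = Real.sqrt (∫ ω, (Y a ω - m a ω) ^ 2 ∂P))
    (r₀' r₁' : ℝ) (hr₀ : r₀' ≤ 0) (hr₁ : 0 ≤ r₁') :
    variance (fun ω =>
        r₀' * (((if A ω = 0 then (1:ℝ) else 0) / π 0) * (Y (A ω) ω - m 0 ω)
            + (m 0 ω - ∫ x, Y 0 x ∂P))
        + r₁' * (((if A ω = 1 then (1:ℝ) else 0) / π 1) * (Y (A ω) ω - m 1 ω)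
            + (m 1 ω - ∫ x, Y 1 x ∂P))) P
      ≤ r₀' ^ 2 * variance (Y 0) P + r₁' ^ 2 * variance (Y 1) P
        + π 0 * π 1 * (|r₀'| * κ 0 / π 0 + |r₁'| * κ 1 / π 1) ^ 2 := by
  classical
  letI : MeasurableSpace Ω := mΩ
  have h2 : ∀ b : Fin 2, b = 0 ∨ b = 1 := by decide
  have hAm : Measurable[mΩ] A := hA
  have hπ0 : (0:ℝ) < π 0 := hπpos 0
  have hπ1 : (0:ℝ) < π 1 := hπpos 1
  set Ψ0 := ∫ x, Y 0 x ∂P with hΨ0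
  set Ψ1 := ∫ x, Y 1 x ∂P with hΨ1
  set c0 : ℝ := r₀' / π 0 with hc0
  set c1 : ℝ := r₁' / π 1 with hc1
  have hc0' : r₀' = c0 * π 0 := by rw [hc0]; field_simp
  have hc1' : r₁' = c1 * π 1 := by rw [hc1]; field_simp
  have hc0np : c0 ≤ 0 := div_nonpos_of_nonpos_of_nonneg hr₀ hπ0.le
  have hc1nn : 0 ≤ c1 := div_nonneg hr₁ hπ1.le
  -- L² facts
  have he0L2 : MemLp (fun ω => Y 0 ω - m 0 ω) 2 P := (hYL2 0).sub (hmL2 0)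
  have he1L2 : MemLp (fun ω => Y 1 ω - m 1 ω) 2 P := (hYL2 1).sub (hmL2 1)
  have hq0L2 : MemLp (fun ω => Y 0 ω - Ψ0) 2 P := (hYL2 0).sub (memLp_const Ψ0)
  have hq1L2 : MemLp (fun ω => Y 1 ω - Ψ1) 2 P := (hYL2 1).sub (memLp_const Ψ1)
  have hμcL2 : MemLp (fun ω => r₀' * (m 0 ω - Ψ0) + r₁' * (m 1 ω - Ψ1)) 2 P :=
    (((hmL2 0).sub (memLp_const Ψ0)).const_mul r₀').add
      (((hmL2 1).sub (memLp_const Ψ1)).const_mul r₁')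
  -- indicator facts
  have hImeas : ∀ a : Fin 2, Measurable[mΩ] (fun ω => if A ω = a then (1:ℝ) else 0) := fun a =>
    Measurable.ite (hAm (MeasurableSet.singleton a)) measurable_const measurable_const
  have hItop : ∀ a : Fin 2, MemLp (fun ω => if A ω = a then (1:ℝ) else 0) ⊤ P := by
    intro a
    have haesmI : AEStronglyMeasurable (fun ω => if A ω = a then (1:ℝ) else 0) P :=
      (hImeas a).aestronglyMeasurable
    refine memLp_top_of_bound haesmI 1 (ae_of_all _ fun ω => ?_)
    by_cases h : A ω = a <;> simp [h]
  have hIbd : ∀ a : Fin 2, ∃ C, ∀ ω, ‖if A ω = a then (1:ℝ) else 0‖ ≤ C := by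
    intro a; exact ⟨1, fun ω => by by_cases h : A ω = a <;> simp [h]⟩
  have hg0L2 : MemLp (fun ω =>
      (if A ω = (0:Fin 2) then (1:ℝ) else 0) * (c0 * (Y 0 ω - m 0 ω))) 2 P :=
    MemLp.smul (r := 2) (he0L2.const_mul c0) (hItop 0)
  have hg1L2 : MemLp (fun ω =>
      (if A ω = (1:Fin 2) then (1:ℝ) else 0) * (c1 * (Y 1 ω - m 1 ω))) 2 P :=
    MemLp.smul (r := 2) (he1L2.const_mul c1) (hItop 1)
  -- the nice form of the estimator
  set F : Ω → ℝ := fun ω =>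
      (r₀' * (m 0 ω - Ψ0) + r₁' * (m 1 ω - Ψ1))
      + (if A ω = (0:Fin 2) then (1:ℝ) else 0) * (c0 * (Y 0 ω - m 0 ω))
      + (if A ω = (1:Fin 2) then (1:ℝ) else 0) * (c1 * (Y 1 ω - m 1 ω)) with hF
  have hFL2 : MemLp F 2 P := (hμcL2.add hg0L2).add hg1L2
  have hfeq : (fun ω =>
      r₀' * (((if A ω = 0 then (1:ℝ) else 0) / π 0) * (Y (A ω) ω - m 0 ω)
          + (m 0 ω - Ψ0))
      + r₁' * (((if A ω = 1 then (1:ℝ) else 0) / π 1) * (Y (A ω) ω - m 1 ω)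
          + (m 1 ω - Ψ1))) = F := by
    funext ω
    rw [hF]
    rcases h2 (A ω) with h | h <;>
      simp only [h, (by decide : (0:Fin 2) ≠ 1), (by decide : (1:Fin 2) ≠ 0),
        ite_true, ite_false, if_true, if_false, reduceIte] <;>
      rw [hc0, hc1] <;> ring
  rw [hfeq]
  -- measurability w.r.t. the second σ-algebra
  set M2 : MeasurableSpace Ω :=
    𝒢 ⊔ MeasurableSpace.comap (fun ω => (Y 0 ω, Y 1 ω)) inferInstance with hM2
  letI : MeasurableSpace Ω := mΩ
  have hcomapP : Measurable[MeasurableSpace.comap (fun ω => (Y 0 ω, Y 1 ω)) inferInstance]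
      (fun ω => (Y 0 ω, Y 1 ω)) := measurable_iff_comap_le.mpr le_rfl
  have hY0m2 : Measurable[M2] (Y 0) :=
    (measurable_fst.comp hcomapP).mono le_sup_right le_rfl
  have hY1m2 : Measurable[M2] (Y 1) :=
    (measurable_snd.comp hcomapP).mono le_sup_right le_rfl
  have hm0m2 : Measurable[M2] (m 0) := (hmG 0).mono le_sup_left le_rfl
  have hm1m2 : Measurable[M2] (m 1) := (hmG 1).mono le_sup_left le_rfl
  have he0m2 : Measurable[M2] (fun ω => Y 0 ω - m 0 ω) := hY0m2.sub hm0m2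
  have he1m2 : Measurable[M2] (fun ω => Y 1 ω - m 1 ω) := hY1m2.sub hm1m2
  have hμm2 : Measurable[M2] (fun ω => r₀' * (m 0 ω - Ψ0) + r₁' * (m 1 ω - Ψ1)) :=
    ((hm0m2.sub measurable_const).const_mul r₀').add
      ((hm1m2.sub measurable_const).const_mul r₁')
  -- the key independence computation
  have hkey : ∀ (a : Fin 2) (h : Ω → ℝ), Measurable[M2] h → AEStronglyMeasurable h P →
      ∫ ω, (if A ω = a then (1:ℝ) else 0) * h ω ∂P = π a * ∫ ω, h ω ∂P := by
    intro a h hm2 haesm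
    have hIa : Measurable[MeasurableSpace.comap A inferInstance]
        (fun ω => if A ω = a then (1:ℝ) else 0) :=
      (measurable_of_countable (fun b : Fin 2 => if b = a then (1:ℝ) else 0)).comp
        (measurable_iff_comap_le.mpr le_rfl)
    have hIndepF : IndepFun (fun ω => if A ω = a then (1:ℝ) else 0) h P := by
      rw [IndepFun_iff_Indep]
      exact indep_of_indep_of_le_right
        (indep_of_indep_of_le_left hindep hIa.comap_le) hm2.comap_le
    have haesmI : AEStronglyMeasurable (fun ω => if A ω = a then (1:ℝ) else 0) P :=
      (hImeas a).aestronglyMeasurable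
    rw [IndepFun.integral_fun_mul_eq_mul_integral hIndepF haesmI haesm]
    congr 1
    have hind : (fun ω => if A ω = a then (1:ℝ) else 0)
        = (A ⁻¹' {a}).indicator (1 : Ω → ℝ) := by
      funext ω
      by_cases hω : A ω = a <;> simp [hω, Set.indicator_apply]
    rw [hind, integral_indicator_one (hAm (MeasurableSet.singleton a)), hπ a]
    rfl
  -- basic integrals
  have hY0i : Integrable (Y 0) P := (hYL2 0).integrable one_le_two
  have hY1i : Integrable (Y 1) P := (hYL2 1).integrable one_le_two
  have hm0i : Integrable (m 0) P := (hmL2 0).integrable one_le_two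
  have hm1i : Integrable (m 1) P := (hmL2 1).integrable one_le_two
  have hμci : Integrable (fun ω => r₀' * (m 0 ω - Ψ0) + r₁' * (m 1 ω - Ψ1)) P :=
    hμcL2.integrable one_le_two
  have hg0i : Integrable (fun ω =>
      (if A ω = (0:Fin 2) then (1:ℝ) else 0) * (c0 * (Y 0 ω - m 0 ω))) P :=
    hg0L2.integrable one_le_two
  have hg1i : Integrable (fun ω =>
      (if A ω = (1:Fin 2) then (1:ℝ) else 0) * (c1 * (Y 1 ω - m 1 ω))) P :=
    hg1L2.integrable one_le_two
  have hIe0 : ∫ ω, (Y 0 ω - m 0 ω) ∂P = 0 := by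
    rw [integral_sub hY0i hm0i, hcons 0, sub_self]
  have hIe1 : ∫ ω, (Y 1 ω - m 1 ω) ∂P = 0 := by
    rw [integral_sub hY1i hm1i, hcons 1, sub_self]
  have hd0i : Integrable (fun ω => r₀' * (m 0 ω - Ψ0)) P := by
    exact (hm0i.sub (integrable_const Ψ0)).const_mul r₀'
  have hd1i : Integrable (fun ω => r₁' * (m 1 ω - Ψ1)) P := by
    exact (hm1i.sub (integrable_const Ψ1)).const_mul r₁'
  have hs0i : Integrable (fun ω => m 0 ω - Ψ0) P := by
    exact hm0i.sub (integrable_const Ψ0)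
  have hs1i : Integrable (fun ω => m 1 ω - Ψ1) P := by
    exact hm1i.sub (integrable_const Ψ1)
  have hIμc : ∫ ω, (r₀' * (m 0 ω - Ψ0) + r₁' * (m 1 ω - Ψ1)) ∂P = 0 := by
    rw [integral_add hd0i hd1i, integral_const_mul, integral_const_mul,
      integral_sub hm0i (integrable_const Ψ0), integral_sub hm1i (integrable_const Ψ1),
      hcons 0, hcons 1]
    simp [← hΨ0, ← hΨ1]
  -- expectation of F is zero
  have h01i : Integrable (fun ω =>
      (r₀' * (m 0 ω - Ψ0) + r₁' * (m 1 ω - Ψ1))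
      + (if A ω = (0:Fin 2) then (1:ℝ) else 0) * (c0 * (Y 0 ω - m 0 ω))) P :=
    hμci.add hg0i
  have hEF : ∫ ω, F ω ∂P = 0 := by
    simp only [hF]
    rw [integral_add h01i hg1i, integral_add hμci hg0i, hIμc,
      hkey 0 _ (he0m2.const_mul c0) ((he0L2.const_mul c0).aestronglyMeasurable),
      hkey 1 _ (he1m2.const_mul c1) ((he1L2.const_mul c1).aestronglyMeasurable),
      integral_const_mul, integral_const_mul, hIe0, hIe1]
    ring
  have hvarF : variance F P = ∫ ω, F ω ^ 2 ∂P := by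
    rw [variance_of_integral_eq_zero hFL2.aestronglyMeasurable.aemeasurable hEF]
  -- integrable products
  have hq0i2 : Integrable (fun ω => (Y 0 ω - Ψ0) ^ 2) P := hq0L2.integrable_sq
  have hq1i2 : Integrable (fun ω => (Y 1 ω - Ψ1) ^ 2) P := hq1L2.integrable_sq
  have he0i2 : Integrable (fun ω => (Y 0 ω - m 0 ω) ^ 2) P := he0L2.integrable_sq
  have he1i2 : Integrable (fun ω => (Y 1 ω - m 1 ω) ^ 2) P := he1L2.integrable_sq
  have hμi2 : Integrable (fun ω => (r₀' * (m 0 ω - Ψ0) + r₁' * (m 1 ω - Ψ1)) ^ 2) P :=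
    hμcL2.integrable_sq
  have hq01i : Integrable (fun ω => (Y 0 ω - Ψ0) * (Y 1 ω - Ψ1)) P :=
    consvar_int_mul hq0L2 hq1L2
  have he01i : Integrable (fun ω => (Y 0 ω - m 0 ω) * (Y 1 ω - m 1 ω)) P :=
    consvar_int_mul he0L2 he1L2
  have hμe0i : Integrable (fun ω =>
      (r₀' * (m 0 ω - Ψ0) + r₁' * (m 1 ω - Ψ1)) * (Y 0 ω - m 0 ω)) P :=
    consvar_int_mul hμcL2 he0L2
  have hμe1i : Integrable (fun ω =>
      (r₀' * (m 0 ω - Ψ0) + r₁' * (m 1 ω - Ψ1)) * (Y 1 ω - m 1 ω)) P :=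
    consvar_int_mul hμcL2 he1L2
  -- measurability w.r.t. M2 of products
  have hμe0m2 : Measurable[M2] (fun ω =>
      (r₀' * (m 0 ω - Ψ0) + r₁' * (m 1 ω - Ψ1)) * (Y 0 ω - m 0 ω)) := hμm2.mul he0m2
  have hμe1m2 : Measurable[M2] (fun ω =>
      (r₀' * (m 0 ω - Ψ0) + r₁' * (m 1 ω - Ψ1)) * (Y 1 ω - m 1 ω)) := hμm2.mul he1m2
  have he0sqm2 : Measurable[M2] (fun ω => (Y 0 ω - m 0 ω) ^ 2) := he0m2.pow_const 2
  have he1sqm2 : Measurable[M2] (fun ω => (Y 1 ω - m 1 ω) ^ 2) := he1m2.pow_const 2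
  -- pointwise expansion of F ^ 2
  have hFsq : (fun ω => F ω ^ 2) = (fun ω => (r₀' * (m 0 ω - Ψ0) + r₁' * (m 1 ω - Ψ1)) ^ 2 + ((2 * c0) * ((if A ω = (0 : Fin 2) then (1:ℝ) else 0) * ((r₀' * (m 0 ω - Ψ0) + r₁' * (m 1 ω - Ψ1)) * (Y 0 ω - m 0 ω))) + ((2 * c1) * ((if A ω = (1 : Fin 2) then (1:ℝ) else 0) * ((r₀' * (m 0 ω - Ψ0) + r₁' * (m 1 ω - Ψ1)) * (Y 1 ω - m 1 ω))) + ((c0 ^ 2) * ((if A ω = (0 : Fin 2) then (1:ℝ) else 0) * ((Y 0 ω - m 0 ω) ^ 2)) + (c1 ^ 2) * ((if A ω = (1 : Fin 2) then (1:ℝ) else 0) * ((Y 1 ω - m 1 ω) ^ 2)))))) := by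
    funext ω
    rw [hF]
    rcases h2 (A ω) with h | h <;>
      simp only [h, (by decide : (0:Fin 2) ≠ 1), (by decide : (1:Fin 2) ≠ 0),
        ite_true, ite_false, if_true, if_false, reduceIte] <;> ring
  -- integrability of the pieces
  have iT1 : Integrable (fun ω => (2 * c0) * ((if A ω = (0 : Fin 2) then (1:ℝ) else 0)
      * ((r₀' * (m 0 ω - Ψ0) + r₁' * (m 1 ω - Ψ1)) * (Y 0 ω - m 0 ω)))) P := by
    exact (hμe0i.bdd_mul (hImeas 0).aestronglyMeasurable (ae_of_all _ (hIbd 0).choose_spec)).const_mul (2 * c0)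
  have iT2 : Integrable (fun ω => (2 * c1) * ((if A ω = (1 : Fin 2) then (1:ℝ) else 0)
      * ((r₀' * (m 0 ω - Ψ0) + r₁' * (m 1 ω - Ψ1)) * (Y 1 ω - m 1 ω)))) P := by
    exact (hμe1i.bdd_mul (hImeas 1).aestronglyMeasurable (ae_of_all _ (hIbd 1).choose_spec)).const_mul (2 * c1)
  have iT3 : Integrable (fun ω => (c0 ^ 2) * ((if A ω = (0 : Fin 2) then (1:ℝ) else 0)
      * ((Y 0 ω - m 0 ω) ^ 2))) P := by
    exact (he0i2.bdd_mul (hImeas 0).aestronglyMeasurable (ae_of_all _ (hIbd 0).choose_spec)).const_mul (c0 ^ 2)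
  have iT4 : Integrable (fun ω => (c1 ^ 2) * ((if A ω = (1 : Fin 2) then (1:ℝ) else 0)
      * ((Y 1 ω - m 1 ω) ^ 2))) P := by
    exact (he1i2.bdd_mul (hImeas 1).aestronglyMeasurable (ae_of_all _ (hIbd 1).choose_spec)).const_mul (c1 ^ 2)
  have i34 : Integrable (fun ω => (c0 ^ 2) * ((if A ω = (0 : Fin 2) then (1:ℝ) else 0)
      * ((Y 0 ω - m 0 ω) ^ 2)) + (c1 ^ 2) * ((if A ω = (1 : Fin 2) then (1:ℝ) else 0)
      * ((Y 1 ω - m 1 ω) ^ 2))) P := iT3.add iT4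
  have i234 : Integrable (fun ω => (2 * c1) * ((if A ω = (1 : Fin 2) then (1:ℝ) else 0)
      * ((r₀' * (m 0 ω - Ψ0) + r₁' * (m 1 ω - Ψ1)) * (Y 1 ω - m 1 ω)))
      + ((c0 ^ 2) * ((if A ω = (0 : Fin 2) then (1:ℝ) else 0) * ((Y 0 ω - m 0 ω) ^ 2))
        + (c1 ^ 2) * ((if A ω = (1 : Fin 2) then (1:ℝ) else 0) * ((Y 1 ω - m 1 ω) ^ 2)))) P :=
    iT2.add i34
  have i1234 : Integrable (fun ω => (2 * c0) * ((if A ω = (0 : Fin 2) then (1:ℝ) else 0)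
      * ((r₀' * (m 0 ω - Ψ0) + r₁' * (m 1 ω - Ψ1)) * (Y 0 ω - m 0 ω)))
      + ((2 * c1) * ((if A ω = (1 : Fin 2) then (1:ℝ) else 0)
          * ((r₀' * (m 0 ω - Ψ0) + r₁' * (m 1 ω - Ψ1)) * (Y 1 ω - m 1 ω)))
        + ((c0 ^ 2) * ((if A ω = (0 : Fin 2) then (1:ℝ) else 0) * ((Y 0 ω - m 0 ω) ^ 2))
          + (c1 ^ 2) * ((if A ω = (1 : Fin 2) then (1:ℝ) else 0) * ((Y 1 ω - m 1 ω) ^ 2))))) P :=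
    iT1.add i234
  -- value of ∫ F²
  have hEF2 : ∫ ω, F ω ^ 2 ∂P
      = (∫ ω, (r₀' * (m 0 ω - Ψ0) + r₁' * (m 1 ω - Ψ1)) ^ 2 ∂P)
      + ((2 * c0) * (π 0 * ∫ ω, (r₀' * (m 0 ω - Ψ0) + r₁' * (m 1 ω - Ψ1)) * (Y 0 ω - m 0 ω) ∂P)
        + ((2 * c1) * (π 1 * ∫ ω, (r₀' * (m 0 ω - Ψ0) + r₁' * (m 1 ω - Ψ1)) * (Y 1 ω - m 1 ω) ∂P)
          + ((c0 ^ 2) * (π 0 * ∫ ω, (Y 0 ω - m 0 ω) ^ 2 ∂P)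
            + (c1 ^ 2) * (π 1 * ∫ ω, (Y 1 ω - m 1 ω) ^ 2 ∂P)))) := by
    rw [hFsq, integral_add hμi2 i1234, integral_add iT1 i234, integral_add iT2 i34,
      integral_add iT3 iT4, integral_const_mul, integral_const_mul, integral_const_mul,
      integral_const_mul,
      hkey 0 _ hμe0m2 hμe0i.aestronglyMeasurable,
      hkey 1 _ hμe1m2 hμe1i.aestronglyMeasurable,
      hkey 0 _ he0sqm2 he0i2.aestronglyMeasurable,
      hkey 1 _ he1sqm2 he1i2.aestronglyMeasurable]
  -- the two expansions of ∫ (r₀'(Y₀-Ψ₀)+r₁'(Y₁-Ψ₁))²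
  have hgidfun : (fun ω => (r₀' ^ 2) * ((Y 0 ω - Ψ0) ^ 2)
        + ((2 * r₀' * r₁') * ((Y 0 ω - Ψ0) * (Y 1 ω - Ψ1))
          + (r₁' ^ 2) * ((Y 1 ω - Ψ1) ^ 2)))
      = (fun ω => (r₀' * (m 0 ω - Ψ0) + r₁' * (m 1 ω - Ψ1)) ^ 2
        + ((2 * r₀') * ((r₀' * (m 0 ω - Ψ0) + r₁' * (m 1 ω - Ψ1)) * (Y 0 ω - m 0 ω))
          + ((2 * r₁') * ((r₀' * (m 0 ω - Ψ0) + r₁' * (m 1 ω - Ψ1)) * (Y 1 ω - m 1 ω))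
            + ((r₀' ^ 2) * ((Y 0 ω - m 0 ω) ^ 2)
              + ((2 * r₀' * r₁') * ((Y 0 ω - m 0 ω) * (Y 1 ω - m 1 ω))
                + (r₁' ^ 2) * ((Y 1 ω - m 1 ω) ^ 2)))))) := by
    funext ω; ring
  have hG : (r₀' ^ 2) * (∫ ω, (Y 0 ω - Ψ0) ^ 2 ∂P)
      + ((2 * r₀' * r₁') * (∫ ω, (Y 0 ω - Ψ0) * (Y 1 ω - Ψ1) ∂P)
        + (r₁' ^ 2) * (∫ ω, (Y 1 ω - Ψ1) ^ 2 ∂P))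
      = (∫ ω, (r₀' * (m 0 ω - Ψ0) + r₁' * (m 1 ω - Ψ1)) ^ 2 ∂P)
      + ((2 * r₀') * (∫ ω, (r₀' * (m 0 ω - Ψ0) + r₁' * (m 1 ω - Ψ1)) * (Y 0 ω - m 0 ω) ∂P)
        + ((2 * r₁') * (∫ ω, (r₀' * (m 0 ω - Ψ0) + r₁' * (m 1 ω - Ψ1)) * (Y 1 ω - m 1 ω) ∂P)
          + ((r₀' ^ 2) * (∫ ω, (Y 0 ω - m 0 ω) ^ 2 ∂P)
            + ((2 * r₀' * r₁') * (∫ ω, (Y 0 ω - m 0 ω) * (Y 1 ω - m 1 ω) ∂P)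
              + (r₁' ^ 2) * (∫ ω, (Y 1 ω - m 1 ω) ^ 2 ∂P))))) := by
    have hL : ∫ ω, ((r₀' ^ 2) * ((Y 0 ω - Ψ0) ^ 2)
        + ((2 * r₀' * r₁') * ((Y 0 ω - Ψ0) * (Y 1 ω - Ψ1))
          + (r₁' ^ 2) * ((Y 1 ω - Ψ1) ^ 2))) ∂P
        = (r₀' ^ 2) * (∫ ω, (Y 0 ω - Ψ0) ^ 2 ∂P)
        + ((2 * r₀' * r₁') * (∫ ω, (Y 0 ω - Ψ0) * (Y 1 ω - Ψ1) ∂P)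
          + (r₁' ^ 2) * (∫ ω, (Y 1 ω - Ψ1) ^ 2 ∂P)) := by
      have j1 : Integrable (fun ω => (r₀' ^ 2) * ((Y 0 ω - Ψ0) ^ 2)) P := by
        exact hq0i2.const_mul _
      have j2 : Integrable (fun ω => (2 * r₀' * r₁') * ((Y 0 ω - Ψ0) * (Y 1 ω - Ψ1))) P := by
        exact hq01i.const_mul _
      have j3 : Integrable (fun ω => (r₁' ^ 2) * ((Y 1 ω - Ψ1) ^ 2)) P := by
        exact hq1i2.const_mul _
      have j23 : Integrable (fun ω => (2 * r₀' * r₁') * ((Y 0 ω - Ψ0) * (Y 1 ω - Ψ1))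
          + (r₁' ^ 2) * ((Y 1 ω - Ψ1) ^ 2)) P := j2.add j3
      rw [integral_add j1 j23, integral_add j2 j3,
        integral_const_mul, integral_const_mul, integral_const_mul]
    have hR : ∫ ω, ((r₀' * (m 0 ω - Ψ0) + r₁' * (m 1 ω - Ψ1)) ^ 2
        + ((2 * r₀') * ((r₀' * (m 0 ω - Ψ0) + r₁' * (m 1 ω - Ψ1)) * (Y 0 ω - m 0 ω))
          + ((2 * r₁') * ((r₀' * (m 0 ω - Ψ0) + r₁' * (m 1 ω - Ψ1)) * (Y 1 ω - m 1 ω))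
            + ((r₀' ^ 2) * ((Y 0 ω - m 0 ω) ^ 2)
              + ((2 * r₀' * r₁') * ((Y 0 ω - m 0 ω) * (Y 1 ω - m 1 ω))
                + (r₁' ^ 2) * ((Y 1 ω - m 1 ω) ^ 2)))))) ∂P
        = (∫ ω, (r₀' * (m 0 ω - Ψ0) + r₁' * (m 1 ω - Ψ1)) ^ 2 ∂P)
        + ((2 * r₀') * (∫ ω, (r₀' * (m 0 ω - Ψ0) + r₁' * (m 1 ω - Ψ1)) * (Y 0 ω - m 0 ω) ∂P)
          + ((2 * r₁') * (∫ ω, (r₀' * (m 0 ω - Ψ0) + r₁' * (m 1 ω - Ψ1)) * (Y 1 ω - m 1 ω) ∂P)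
            + ((r₀' ^ 2) * (∫ ω, (Y 0 ω - m 0 ω) ^ 2 ∂P)
              + ((2 * r₀' * r₁') * (∫ ω, (Y 0 ω - m 0 ω) * (Y 1 ω - m 1 ω) ∂P)
                + (r₁' ^ 2) * (∫ ω, (Y 1 ω - m 1 ω) ^ 2 ∂P))))) := by
      have k2 : Integrable (fun ω => (2 * r₀') * ((r₀' * (m 0 ω - Ψ0) + r₁' * (m 1 ω - Ψ1)) * (Y 0 ω - m 0 ω))) P := by exact hμe0i.const_mul _
      have k3 : Integrable (fun ω => (2 * r₁') * ((r₀' * (m 0 ω - Ψ0) + r₁' * (m 1 ω - Ψ1)) * (Y 1 ω - m 1 ω))) P := by exact hμe1i.const_mul _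
      have k4 : Integrable (fun ω => (r₀' ^ 2) * ((Y 0 ω - m 0 ω) ^ 2)) P := by exact he0i2.const_mul _
      have k5 : Integrable (fun ω => (2 * r₀' * r₁') * ((Y 0 ω - m 0 ω) * (Y 1 ω - m 1 ω))) P := by exact he01i.const_mul _
      have k6 : Integrable (fun ω => (r₁' ^ 2) * ((Y 1 ω - m 1 ω) ^ 2)) P := by exact he1i2.const_mul _
      have k56 : Integrable (fun ω => (2 * r₀' * r₁') * ((Y 0 ω - m 0 ω) * (Y 1 ω - m 1 ω)) + (r₁' ^ 2) * ((Y 1 ω - m 1 ω) ^ 2)) P := k5.add k6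
      have k456 : Integrable (fun ω => (r₀' ^ 2) * ((Y 0 ω - m 0 ω) ^ 2) + ((2 * r₀' * r₁') * ((Y 0 ω - m 0 ω) * (Y 1 ω - m 1 ω)) + (r₁' ^ 2) * ((Y 1 ω - m 1 ω) ^ 2))) P := k4.add k56
      have k3456 : Integrable (fun ω => (2 * r₁') * ((r₀' * (m 0 ω - Ψ0) + r₁' * (m 1 ω - Ψ1)) * (Y 1 ω - m 1 ω)) + ((r₀' ^ 2) * ((Y 0 ω - m 0 ω) ^ 2) + ((2 * r₀' * r₁') * ((Y 0 ω - m 0 ω) * (Y 1 ω - m 1 ω)) + (r₁' ^ 2) * ((Y 1 ω - m 1 ω) ^ 2)))) P := k3.add k456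
      have k23456 : Integrable (fun ω => (2 * r₀') * ((r₀' * (m 0 ω - Ψ0) + r₁' * (m 1 ω - Ψ1)) * (Y 0 ω - m 0 ω)) + ((2 * r₁') * ((r₀' * (m 0 ω - Ψ0) + r₁' * (m 1 ω - Ψ1)) * (Y 1 ω - m 1 ω)) + ((r₀' ^ 2) * ((Y 0 ω - m 0 ω) ^ 2) + ((2 * r₀' * r₁') * ((Y 0 ω - m 0 ω) * (Y 1 ω - m 1 ω)) + (r₁' ^ 2) * ((Y 1 ω - m 1 ω) ^ 2))))) P := k2.add k3456
      rw [integral_add hμi2 k23456, integral_add k2 k3456, integral_add k3 k456,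
        integral_add k4 k56, integral_add k5 k6,
        integral_const_mul, integral_const_mul, integral_const_mul, integral_const_mul,
        integral_const_mul]
    rw [← hL, ← hR, hgidfun]
  -- variances and covariance
  have hvY0 : variance (Y 0) P = ∫ ω, (Y 0 ω - Ψ0) ^ 2 ∂P := by
    rw [variance_eq_integral (hYL2 0).aestronglyMeasurable.aemeasurable]
  have hvY1 : variance (Y 1) P = ∫ ω, (Y 1 ω - Ψ1) ^ 2 ∂P := by
    rw [variance_eq_integral (hYL2 1).aestronglyMeasurable.aemeasurable]
  have hCv : 0 ≤ ∫ ω, (Y 0 ω - Ψ0) * (Y 1 ω - Ψ1) ∂P := by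
    have : cov P (Y 0) (Y 1) = ∫ ω, (Y 0 ω - Ψ0) * (Y 1 ω - Ψ1) ∂P := rfl
    rw [← this]; exact hcovpos
  -- κ facts
  have hK0nn : 0 ≤ ∫ ω, (Y 0 ω - m 0 ω) ^ 2 ∂P := integral_nonneg fun ω => sq_nonneg _
  have hK1nn : 0 ≤ ∫ ω, (Y 1 ω - m 1 ω) ^ 2 ∂P := integral_nonneg fun ω => sq_nonneg _
  have hκ0 : κ 0 = Real.sqrt (∫ ω, (Y 0 ω - m 0 ω) ^ 2 ∂P) := hκ 0
  have hκ1 : κ 1 = Real.sqrt (∫ ω, (Y 1 ω - m 1 ω) ^ 2 ∂P) := hκ 1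
  have hκ0nn : 0 ≤ κ 0 := by rw [hκ0]; exact Real.sqrt_nonneg _
  have hκ1nn : 0 ≤ κ 1 := by rw [hκ1]; exact Real.sqrt_nonneg _
  have hκ0sq : κ 0 ^ 2 = ∫ ω, (Y 0 ω - m 0 ω) ^ 2 ∂P := by
    rw [hκ0, Real.sq_sqrt hK0nn]
  have hκ1sq : κ 1 ^ 2 = ∫ ω, (Y 1 ω - m 1 ω) ^ 2 ∂P := by
    rw [hκ1, Real.sq_sqrt hK1nn]
  -- Cauchy–Schwarz
  have hCS : ∫ ω, (Y 0 ω - m 0 ω) * (Y 1 ω - m 1 ω) ∂P ≤ κ 0 * κ 1 := by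
    rcases eq_or_lt_of_le hK0nn with h0 | h0
    · have hz : (fun ω => (Y 0 ω - m 0 ω) ^ 2) =ᵐ[P] 0 :=
        (integral_eq_zero_iff_of_nonneg (fun ω => sq_nonneg _) he0i2).mp h0.symm
      have hz' : (fun ω => (Y 0 ω - m 0 ω) * (Y 1 ω - m 1 ω)) =ᵐ[P] 0 := by
        filter_upwards [hz] with ω hω
        have : (Y 0 ω - m 0 ω) ^ 2 = 0 := hω
        have h0' : Y 0 ω - m 0 ω = 0 := by
          exact pow_eq_zero_iff (n := 2) (by norm_num) |>.mp this
        simp [h0']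
      rw [integral_eq_zero_of_ae hz']
      exact mul_nonneg hκ0nn hκ1nn
    · rcases eq_or_lt_of_le hK1nn with h1 | h1
      · have hz : (fun ω => (Y 1 ω - m 1 ω) ^ 2) =ᵐ[P] 0 :=
          (integral_eq_zero_iff_of_nonneg (fun ω => sq_nonneg _) he1i2).mp h1.symm
        have hz' : (fun ω => (Y 0 ω - m 0 ω) * (Y 1 ω - m 1 ω)) =ᵐ[P] 0 := by
          filter_upwards [hz] with ω hω
          have : (Y 1 ω - m 1 ω) ^ 2 = 0 := hω
          have h1' : Y 1 ω - m 1 ω = 0 := by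
            exact pow_eq_zero_iff (n := 2) (by norm_num) |>.mp this
          simp [h1']
        rw [integral_eq_zero_of_ae hz']
        exact mul_nonneg hκ0nn hκ1nn
      · have hκ0pos : 0 < κ 0 := by rw [hκ0]; exact Real.sqrt_pos.mpr h0
        have hκ1pos : 0 < κ 1 := by rw [hκ1]; exact Real.sqrt_pos.mpr h1
        have hpt : (fun ω => (κ 1 * (Y 0 ω - m 0 ω) - κ 0 * (Y 1 ω - m 1 ω)) ^ 2)
            = (fun ω => (κ 1 ^ 2) * ((Y 0 ω - m 0 ω) ^ 2)
              + ((-(2 * κ 0 * κ 1)) * ((Y 0 ω - m 0 ω) * (Y 1 ω - m 1 ω))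
                + (κ 0 ^ 2) * ((Y 1 ω - m 1 ω) ^ 2))) := by
          funext ω; ring
        have hnn : 0 ≤ ∫ ω, (κ 1 * (Y 0 ω - m 0 ω) - κ 0 * (Y 1 ω - m 1 ω)) ^ 2 ∂P :=
          integral_nonneg fun ω => sq_nonneg _
        have hexp : ∫ ω, (κ 1 * (Y 0 ω - m 0 ω) - κ 0 * (Y 1 ω - m 1 ω)) ^ 2 ∂P
            = (κ 1 ^ 2) * (∫ ω, (Y 0 ω - m 0 ω) ^ 2 ∂P)
              + ((-(2 * κ 0 * κ 1)) * (∫ ω, (Y 0 ω - m 0 ω) * (Y 1 ω - m 1 ω) ∂P)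
                + (κ 0 ^ 2) * (∫ ω, (Y 1 ω - m 1 ω) ^ 2 ∂P)) := by
          have l1 : Integrable (fun ω => (κ 1 ^ 2) * ((Y 0 ω - m 0 ω) ^ 2)) P := by exact he0i2.const_mul _
          have l2 : Integrable (fun ω => (-(2 * κ 0 * κ 1)) * ((Y 0 ω - m 0 ω) * (Y 1 ω - m 1 ω))) P := by exact he01i.const_mul _
          have l3 : Integrable (fun ω => (κ 0 ^ 2) * ((Y 1 ω - m 1 ω) ^ 2)) P := by exact he1i2.const_mul _
          have l23 : Integrable (fun ω => (-(2 * κ 0 * κ 1)) * ((Y 0 ω - m 0 ω) * (Y 1 ω - m 1 ω)) + (κ 0 ^ 2) * ((Y 1 ω - m 1 ω) ^ 2)) P := l2.add l3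
          rw [hpt, integral_add l1 l23, integral_add l2 l3,
            integral_const_mul, integral_const_mul, integral_const_mul]
        rw [hexp, ← hκ0sq, ← hκ1sq] at hnn
        exact consvar_cs_aux hκ0pos hκ1pos hnn
  -- put everything together
  rw [hvarF, hEF2, hvY0, hvY1, abs_of_nonpos hr₀, abs_of_nonneg hr₁]
  have hdiv0 : -r₀' * κ 0 / π 0 = -(c0 * κ 0) := by rw [hc0]; field_simp
  have hdiv1 : r₁' * κ 1 / π 1 = c1 * κ 1 := by rw [hc1]; field_simp
  rw [hdiv0, hdiv1]
  have hB0eq : (2 * c0) * (π 0 * (∫ ω,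
      (r₀' * (m 0 ω - Ψ0) + r₁' * (m 1 ω - Ψ1)) * (Y 0 ω - m 0 ω) ∂P))
      = (2 * r₀') * (∫ ω, (r₀' * (m 0 ω - Ψ0) + r₁' * (m 1 ω - Ψ1)) * (Y 0 ω - m 0 ω) ∂P) := by
    rw [hc0']; ring
  have hB1eq : (2 * c1) * (π 1 * (∫ ω,
      (r₀' * (m 0 ω - Ψ0) + r₁' * (m 1 ω - Ψ1)) * (Y 1 ω - m 1 ω) ∂P))
      = (2 * r₁') * (∫ ω, (r₀' * (m 0 ω - Ψ0) + r₁' * (m 1 ω - Ψ1)) * (Y 1 ω - m 1 ω) ∂P) := by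
    rw [hc1']; ring
  have stepA : 2 * r₀' * r₁' * (∫ ω, (Y 0 ω - Ψ0) * (Y 1 ω - Ψ1) ∂P) ≤ 0 := by
    have h := mul_nonneg (mul_nonneg (neg_nonneg.2 hr₀) hr₁) hCv
    linarith only [h]
  have stepB : 2 * r₀' * r₁' * (κ 0 * κ 1)
      ≤ 2 * r₀' * r₁' * (∫ ω, (Y 0 ω - m 0 ω) * (Y 1 ω - m 1 ω) ∂P) := by
    have h := mul_nonneg (mul_nonneg (neg_nonneg.2 hr₀) hr₁) (sub_nonneg.2 hCS)
    linarith only [h]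
  have stepC : c0 ^ 2 * (π 0 * (κ 0 ^ 2)) + c1 ^ 2 * (π 1 * (κ 1 ^ 2))
      - r₀' ^ 2 * (κ 0 ^ 2) - r₁' ^ 2 * (κ 1 ^ 2) - 2 * r₀' * r₁' * (κ 0 * κ 1)
      = π 0 * π 1 * (-(c0 * κ 0) + c1 * κ 1) ^ 2 := by
    rw [hc0', hc1']
    linear_combination (-(c0 ^ 2 * κ 0 ^ 2 * π 0 + c1 ^ 2 * κ 1 ^ 2 * π 1)) * hπsum
  rw [← hκ0sq, ← hκ1sq] at hG ⊢
  linarith only [hG, stepA, stepB, stepC, hB0eq, hB1eq]
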